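/- Let h > ℓ ≥ 1 and k ≥ 1 be integers and c > 0. Define g^A(x) = P(Bin(h−1,x) < ℓ), g^B(q) = 1 − Q(chq, k), and Δ(x) = x − g^A(g^B(x)) for x ∈ [0,1]. Then Δ(0) = 0, Δ(1) > 0, and exactly one of the following holds: either Δ(x) ≥ 0 for all x ∈ [0,1], or there exist 0 ≤ u < v < 1 such that Δ(x) ≥ 0 for x ∈ [0,u] ∪ [v,1] and Δ(x) ≤ 0 for x ∈ [u,v]. -/

import Mathlib

/-!
Write `P(z) = ℙ(Poisson(z) < k)` and `B(y) = ℙ(Bin(h-1, y) < ℓ)`, so that `g^B(x) = P(chx)`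
and `Δ(x) = x - F(chx)` with `F = B ∘ P`. The elasticity `z F'(z) / F(z)` factors as
`A(P(z)) · G(z)`, where `A(y) = (1 - y)(-B'(y)) / B(y)` equals
`(h-1)·C(h-2, ℓ-1) / ∑_{j<ℓ} C(h-1, j) ((1-y)/y)^(ℓ-1-j)`, nondecreasing in `y`, and
`G(z) = z P'(z) / (P(z) - 1) = 1 / ((k-1)! ∑_j z^j / (j+k)!)` is strictly decreasing.
As `P` decreases, the elasticity of `F` is strictly decreasing, so `F(z)/z`, whose derivative
has the sign of the elasticity minus one, increases and then decreases. Hence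
`{x > 0 | Δ(x) ≤ 0}` is an interval on whose interior `Δ < 0`, and continuity together with
`Δ(0) = 0 < Δ(1)` gives the dichotomy.
-/

/-- `Q x y = e^{-x} ∑_{j ≥ y} x^j / j!`. -/
noncomputable def Q (x : ℝ) (y : ℕ) : ℝ :=
  Real.exp (-x) * ∑' j : ℕ, if y ≤ j then x ^ j / (Nat.factorial j : ℝ) else 0

/-- `P(Bin(n,p) = j)`. -/
noncomputable def binomPMF (n j : ℕ) (p : ℝ) : ℝ :=
  (n.choose j : ℝ) * p ^ j * (1 - p) ^ (n - j)

/-- `g^A(x) = P(Bin(h−1,x) < ℓ)`. -/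
noncomputable def gA (h ℓ : ℕ) (x : ℝ) : ℝ :=
  ∑ j ∈ Finset.range ℓ, binomPMF (h - 1) j x

/-- `g^B(q) = 1 − Q(chq, k)`. -/
noncomputable def gB (h k : ℕ) (c q : ℝ) : ℝ := 1 - Q (c * h * q) k

/-- `Δ(x) = x − g^A(g^B(x))`. -/
noncomputable def Δfun (h ℓ k : ℕ) (c x : ℝ) : ℝ := x - gA h ℓ (gB h k c x)

open Finset Set Filter Topology
open scoped Nat

section Poisson

noncomputable def poissonLT (k : ℕ) (z : ℝ) : ℝ :=
  Real.exp (-z) * ∑ j ∈ range k, z ^ j / j !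

noncomputable def expTail (k : ℕ) (z : ℝ) : ℝ := ∑' j : ℕ, z ^ j / (j + k)!

lemma summable_pow_div_factorial_add (k : ℕ) (z : ℝ) :
    Summable fun j : ℕ => z ^ j / (j + k)! := by
  refine Summable.of_norm_bounded (Real.summable_pow_div_factorial |z|) fun j => ?_
  rw [Real.norm_eq_abs, abs_div, abs_pow, Nat.abs_cast]
  gcongr
  exact Nat.le_add_right j k

lemma exp_eq_sum_add_pow_mul_expTail (k : ℕ) (z : ℝ) :
    Real.exp z = ∑ j ∈ range k, z ^ j / j ! + z ^ k * expTail k z := by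
  have htail : ∑' j : ℕ, z ^ (j + k) / (j + k)! = z ^ k * expTail k z := by
    rw [expTail, ← tsum_mul_left]
    refine tsum_congr fun j => ?_
    rw [pow_add]
    ring
  rw [Real.exp_eq_exp_ℝ, NormedSpace.exp_eq_tsum_div, ← htail,
    (Real.summable_pow_div_factorial z).sum_add_tsum_nat_add k]

lemma Q_eq_exp_neg_mul_pow_mul_expTail (z : ℝ) (k : ℕ) :
    Q z k = Real.exp (-z) * (z ^ k * expTail k z) := by
  have hs : Summable fun j : ℕ => if k ≤ j then z ^ j / j ! else 0 :=
    (summable_nat_add_iff k).mp <| by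
      simpa using (summable_nat_add_iff k).mpr (Real.summable_pow_div_factorial z)
  have htail : ∑' j : ℕ, (if k ≤ j + k then z ^ (j + k) / (j + k)! else 0) =
      z ^ k * expTail k z := by
    rw [expTail, ← tsum_mul_left]
    refine tsum_congr fun j => ?_
    rw [if_pos (Nat.le_add_left k j), pow_add]
    ring
  rw [Q, ← hs.sum_add_tsum_nat_add k,
    sum_eq_zero fun j hj => if_neg (not_le.mpr (mem_range.mp hj)), zero_add, htail]

lemma poissonLT_add_Q (k : ℕ) (z : ℝ) : poissonLT k z + Q z k = 1 := by
  rw [poissonLT, Q_eq_exp_neg_mul_pow_mul_expTail, ← mul_add,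
    ← exp_eq_sum_add_pow_mul_expTail, ← Real.exp_add, neg_add_cancel, Real.exp_zero]

lemma expTail_pos (k : ℕ) {z : ℝ} (hz : 0 ≤ z) : 0 < expTail k z :=
  (summable_pow_div_factorial_add k z).tsum_pos (fun j => by positivity) 0 (by rw [pow_zero, zero_add]; positivity)

lemma expTail_strictMonoOn (k : ℕ) : StrictMonoOn (expTail k) (Ici 0) := by
  intro z₁ hz₁ z₂ _ h
  refine Summable.tsum_lt_tsum (i := 1) (fun j => ?_) ?_
    (summable_pow_div_factorial_add k z₁) (summable_pow_div_factorial_add k z₂)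
  · gcongr
  · simpa using div_lt_div_of_pos_right h (by positivity)

lemma poissonLT_zero {k : ℕ} (hk : k ≠ 0) : poissonLT k 0 = 1 := by
  obtain ⟨m, rfl⟩ := Nat.exists_eq_succ_of_ne_zero hk
  simp [poissonLT, sum_range_succ']

lemma poissonLT_pos {k : ℕ} (hk : k ≠ 0) {z : ℝ} (hz : 0 ≤ z) : 0 < poissonLT k z :=
  mul_pos (Real.exp_pos _) <|
    sum_pos' (fun j _ => by positivity) ⟨0, mem_range.mpr (Nat.pos_of_ne_zero hk), by simp⟩

lemma poissonLT_lt_one (k : ℕ) {z : ℝ} (hz : 0 < z) : poissonLT k z < 1 := by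
  have hQ : 0 < Q z k := by
    rw [Q_eq_exp_neg_mul_pow_mul_expTail]
    have := expTail_pos k hz.le
    positivity
  linarith [poissonLT_add_Q k z]

lemma hasDerivAt_sum_pow_div_factorial (m : ℕ) (z : ℝ) :
    HasDerivAt (fun w : ℝ => ∑ j ∈ range (m + 1), w ^ j / j !) (∑ j ∈ range m, z ^ j / j !) z := by
  induction m with
  | zero => simpa using hasDerivAt_const z (1 : ℝ)
  | succ m ih =>
    have hsplit : (fun w : ℝ => ∑ j ∈ range (m + 2), w ^ j / j !) =
        fun w : ℝ => ∑ j ∈ range (m + 1), w ^ j / j ! + w ^ (m + 1) / (m + 1)! :=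
      funext fun w => sum_range_succ _ _
    rw [hsplit]
    refine (ih.add ((hasDerivAt_pow (m + 1) z).div_const _)).congr_deriv ?_
    rw [sum_range_succ, Nat.factorial_succ]
    push_cast
    field_simp

lemma hasDerivAt_poissonLT (m : ℕ) (z : ℝ) :
    HasDerivAt (poissonLT (m + 1)) (-(Real.exp (-z) * z ^ m / m !)) z := by
  refine ((hasDerivAt_neg z).exp.mul (hasDerivAt_sum_pow_div_factorial m z)).congr_deriv ?_
  rw [sum_range_succ]
  ring

lemma poissonLT_antitoneOn (m : ℕ) : AntitoneOn (poissonLT (m + 1)) (Ici 0) := by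
  refine antitoneOn_of_hasDerivWithinAt_nonpos (convex_Ici 0)
    (fun z _ => (hasDerivAt_poissonLT m z).continuousAt.continuousWithinAt)
    (fun z _ => (hasDerivAt_poissonLT m z).hasDerivWithinAt) fun z hz => ?_
  rw [interior_Ici] at hz
  have : 0 ≤ Real.exp (-z) * z ^ m / m ! := by have := hz.out.le; positivity
  linarith

/-- `z (-P'(z)) / (1 - P(z))` for `P = poissonLT (m + 1)`, the elasticity of `z ↦ Q z (m + 1)`. -/
noncomputable def poissonFactor (m : ℕ) (z : ℝ) : ℝ := (m ! * expTail (m + 1) z)⁻¹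

lemma poissonFactor_pos (m : ℕ) {z : ℝ} (hz : 0 ≤ z) : 0 < poissonFactor m z := by
  have := expTail_pos (m + 1) hz
  unfold poissonFactor
  positivity

lemma poissonFactor_strictAntiOn (m : ℕ) : StrictAntiOn (poissonFactor m) (Ioi 0) := by
  intro z₁ hz₁ z₂ hz₂ h
  have := expTail_pos (m + 1) (mem_Ioi.mp hz₁).le
  unfold poissonFactor
  gcongr
  exact expTail_strictMonoOn (m + 1) (mem_Ioi.mp hz₁).le (mem_Ioi.mp hz₂).le h

lemma poissonFactor_mul_Q (m : ℕ) {z : ℝ} (hz : 0 ≤ z) :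
    poissonFactor m z * Q z (m + 1) = z * (Real.exp (-z) * z ^ m / m !) := by
  have := expTail_pos (m + 1) hz
  rw [poissonFactor, Q_eq_exp_neg_mul_pow_mul_expTail]
  field_simp
  ring

end Poisson

section Binomial

noncomputable def binomLT (n ℓ : ℕ) (y : ℝ) : ℝ := ∑ j ∈ range ℓ, binomPMF n j y

lemma binomPMF_eq_eval_bernsteinPolynomial (n j : ℕ) (y : ℝ) :
    binomPMF n j y = (bernsteinPolynomial ℝ n j).eval y := by
  simp [binomPMF, bernsteinPolynomial]

lemma binomPMF_nonneg (n j : ℕ) {y : ℝ} (h₀ : 0 ≤ y) (h₁ : y ≤ 1) : 0 ≤ binomPMF n j y := by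
  have : 0 ≤ 1 - y := by linarith
  unfold binomPMF
  positivity

lemma hasDerivAt_binomLT (n e : ℕ) (y : ℝ) :
    HasDerivAt (binomLT (n + 1) (e + 1)) (-((n + 1) * binomPMF n e y)) y := by
  have htelescope : ∑ j ∈ range (e + 1), Polynomial.derivative (bernsteinPolynomial ℝ (n + 1) j) =
      -((n + 1 : Polynomial ℝ) * bernsteinPolynomial ℝ n e) := by
    induction e with
    | zero =>
      rw [sum_range_one, bernsteinPolynomial.derivative_zero, Nat.add_sub_cancel]
      push_cast
      ring
    | succ e ih =>
      rw [sum_range_succ, ih, bernsteinPolynomial.derivative_succ]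
      push_cast
      ring
  have hpoly : binomLT (n + 1) (e + 1) =
      fun y => (∑ j ∈ range (e + 1), bernsteinPolynomial ℝ (n + 1) j).eval y := by
    ext y
    simp [binomLT, binomPMF_eq_eval_bernsteinPolynomial, Polynomial.eval_finsetSum]
  rw [hpoly]
  refine (Polynomial.hasDerivAt _ y).congr_deriv ?_
  rw [Polynomial.derivative_sum, htelescope]
  simp [binomPMF_eq_eval_bernsteinPolynomial]

lemma binomLT_one {n ℓ : ℕ} (hℓ : ℓ ≤ n) : binomLT n ℓ 1 = 0 :=
  sum_eq_zero fun j hj => by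
    simp [binomPMF, zero_pow (Nat.sub_ne_zero_of_lt ((mem_range.mp hj).trans_le hℓ))]

lemma binomLT_pos (n : ℕ) {ℓ : ℕ} (hℓ : ℓ ≠ 0) {y : ℝ} (h₀ : 0 ≤ y) (h₁ : y < 1) :
    0 < binomLT n ℓ y := by
  have : 0 < 1 - y := by linarith
  exact sum_pos' (fun j _ => binomPMF_nonneg n j h₀ h₁.le)
    ⟨0, mem_range.mpr (Nat.pos_of_ne_zero hℓ), by simpa [binomPMF] using pow_pos this n⟩

lemma binomLT_lt_one {n ℓ : ℕ} (hℓ : ℓ ≤ n) {y : ℝ} (h₀ : 0 < y) (h₁ : y < 1) :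
    binomLT n ℓ y < 1 := by
  have htotal : binomLT n (n + 1) y = 1 := by
    simpa [binomLT, binomPMF_eq_eval_bernsteinPolynomial, Polynomial.eval_finsetSum] using
      congr_arg (Polynomial.eval y) (bernsteinPolynomial.sum ℝ n)
  have hle : binomLT n (ℓ + 1) y ≤ binomLT n (n + 1) y :=
    sum_le_sum_of_subset_of_nonneg (range_subset_range.mpr (by omega))
      fun j _ _ => binomPMF_nonneg n j h₀.le h₁.le
  have hpos : 0 < binomPMF n ℓ y := by
    have : 0 < 1 - y := by linarith
    have := Nat.choose_pos hℓ
    unfold binomPMF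
    positivity
  rw [binomLT, sum_range_succ] at hle
  rw [binomLT]
  linarith

noncomputable def binomOddsSum (N e : ℕ) (y : ℝ) : ℝ :=
  ∑ j ∈ range (e + 1), (N.choose j : ℝ) * ((1 - y) / y) ^ (e - j)

lemma binomLT_eq_mul_binomOddsSum {N e : ℕ} (he : e ≤ N) {y : ℝ} (hy : y ≠ 0) :
    binomLT N (e + 1) y = y ^ e * (1 - y) ^ (N - e) * binomOddsSum N e y := by
  rw [binomLT, binomOddsSum, mul_sum]
  refine sum_congr rfl fun j hj => ?_
  obtain ⟨d, rfl⟩ : ∃ d, e = j + d := ⟨e - j, by have := mem_range.mp hj; omega⟩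
  rw [binomPMF, Nat.add_sub_cancel_left, show N - j = N - (j + d) + d by omega, div_pow]
  field_simp
  ring

lemma binomOddsSum_pos {N e : ℕ} (he : e ≤ N) {y : ℝ} (h₀ : 0 < y) (h₁ : y ≤ 1) :
    0 < binomOddsSum N e y := by
  have : 0 ≤ (1 - y) / y := div_nonneg (by linarith) h₀.le
  rw [binomOddsSum, sum_range_succ, Nat.sub_self, pow_zero, mul_one]
  have := Nat.choose_pos he
  positivity

lemma binomOddsSum_antitoneOn (N e : ℕ) : AntitoneOn (binomOddsSum N e) (Ioc 0 1) := by
  rintro y₁ ⟨hy₁, -⟩ y₂ ⟨-, hy₂⟩ h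
  refine sum_le_sum fun j _ => ?_
  have : 0 ≤ 1 - y₁ := by linarith
  have : 0 ≤ (1 - y₂) / y₂ := div_nonneg (by linarith) (hy₁.trans_le h).le
  gcongr

/-- `(1 - y) (-B'(y)) / B(y)` for `B = binomLT (n + 1) (e + 1)`: the elasticity of `B` in `1 - y`. -/
noncomputable def binomFactor (n e : ℕ) (y : ℝ) : ℝ :=
  (n + 1) * n.choose e / binomOddsSum (n + 1) e y

lemma binomFactor_pos {n e : ℕ} (he : e ≤ n) {y : ℝ} (h₀ : 0 < y) (h₁ : y ≤ 1) :
    0 < binomFactor n e y := by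
  have := binomOddsSum_pos (by omega : e ≤ n + 1) h₀ h₁
  have := Nat.choose_pos he
  unfold binomFactor
  positivity

lemma binomFactor_monotoneOn {n e : ℕ} (he : e ≤ n) : MonotoneOn (binomFactor n e) (Ioc 0 1) := by
  intro y₁ hy₁ y₂ hy₂ h
  have := binomOddsSum_pos (by omega : e ≤ n + 1) hy₂.1 hy₂.2
  unfold binomFactor
  gcongr
  exact binomOddsSum_antitoneOn (n + 1) e hy₁ hy₂ h

lemma binomFactor_mul_binomLT {n e : ℕ} (he : e ≤ n) {y : ℝ} (h₀ : 0 < y) (h₁ : y ≤ 1) :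
    binomFactor n e y * binomLT (n + 1) (e + 1) y = (1 - y) * ((n + 1) * binomPMF n e y) := by
  have := binomOddsSum_pos (by omega : e ≤ n + 1) h₀ h₁
  rw [binomLT_eq_mul_binomOddsSum (by omega) h₀.ne', binomFactor, binomPMF,
    show n + 1 - e = n - e + 1 by omega]
  field_simp
  ring

end Binomial

lemma min_lt_of_hasDerivAt_mul_strictAntiOn {r g W : ℝ → ℝ} {s : Set ℝ} (hs : s.OrdConnected)
    (hr : ∀ x ∈ s, HasDerivAt r (g x * W x) x) (hg : ∀ x ∈ s, 0 < g x) (hW : StrictAntiOn W s)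
    {a b c : ℝ} (ha : a ∈ s) (hc : c ∈ s) (hab : a < b) (hbc : b < c) :
    min (r a) (r c) < r b := by
  have hb : b ∈ s := hs.out ha hc ⟨hab.le, hbc.le⟩
  have hcont : ∀ t ⊆ s, ContinuousOn r t :=
    fun t ht x hx => (hr x (ht hx)).continuousAt.continuousWithinAt
  obtain ⟨p, hp, hp'⟩ := exists_hasDerivAt_eq_slope r _ hab (hcont _ (hs.out ha hb))
    fun x hx => hr x (hs.out ha hb (Ioo_subset_Icc_self hx))
  obtain ⟨q, hq, hq'⟩ := exists_hasDerivAt_eq_slope r _ hbc (hcont _ (hs.out hb hc))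
    fun x hx => hr x (hs.out hb hc (Ioo_subset_Icc_self hx))
  have hps : p ∈ s := hs.out ha hb (Ioo_subset_Icc_self hp)
  have hqs : q ∈ s := hs.out hb hc (Ioo_subset_Icc_self hq)
  by_contra! hmin
  have hWp : W p ≤ 0 := nonpos_of_mul_nonpos_right (by
    rw [hp']
    exact div_nonpos_of_nonpos_of_nonneg (by linarith [min_le_left (r a) (r c)]) (by linarith))
    (hg p hps)
  have hWq : 0 ≤ W q := nonneg_of_mul_nonneg_right (by
    rw [hq']
    exact div_nonneg (by linarith [min_le_right (r a) (r c)]) (by linarith)) (hg q hqs)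
  linarith [hW hps hqs (hp.2.trans hq.1)]

lemma mul_lt_of_elasticity_strictAntiOn {F F' E : ℝ → ℝ}
    (hF : ∀ z, 0 < z → HasDerivAt F (F' z) z) (hpos : ∀ z, 0 < z → 0 < F z)
    (hE : ∀ z, 0 < z → z * F' z = E z * F z) (hanti : StrictAntiOn E (Ioi 0))
    {t a b c : ℝ} (ha : 0 < a) (hab : a < b) (hbc : b < c)
    (hta : t * a ≤ F a) (htc : t * c ≤ F c) : t * b < F b := by
  have hb : 0 < b := ha.trans hab
  have hr : ∀ z ∈ Ioi (0 : ℝ), HasDerivAt (fun z => F z / z) (F z / z ^ 2 * (E z - 1)) z := by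
    intro z hz
    have hz : 0 < z := hz
    refine ((hF z hz).div (hasDerivAt_id' z) hz.ne').congr_deriv ?_
    have := hE z hz
    field_simp
    linear_combination this
  have hmin := min_lt_of_hasDerivAt_mul_strictAntiOn ordConnected_Ioi hr
    (fun z hz => div_pos (hpos z hz) (pow_pos hz 2))
    (fun x hx y hy hxy => sub_lt_sub_right (hanti hx hy hxy) 1)
    (mem_Ioi.mpr ha) (mem_Ioi.mpr (hb.trans hbc)) hab hbc
  have hta' : t ≤ F a / a := (le_div_iff₀ ha).mpr hta
  have htc' : t ≤ F c / c := (le_div_iff₀ (hb.trans hbc)).mpr htc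
  exact (lt_div_iff₀ hb).mp ((le_min hta' htc').trans_lt hmin)

section Composition

variable (n e m : ℕ)

lemma hasDerivAt_binomLT_poissonLT (z : ℝ) :
    HasDerivAt (fun z => binomLT (n + 1) (e + 1) (poissonLT (m + 1) z))
      (-((n + 1) * binomPMF n e (poissonLT (m + 1) z)) * -(Real.exp (-z) * z ^ m / m !)) z :=
  (hasDerivAt_binomLT n e _).comp z (hasDerivAt_poissonLT m z)

variable {n e}

lemma mul_deriv_binomLT_poissonLT_eq (he : e ≤ n) {z : ℝ} (hz : 0 < z) :
    z * (-((n + 1) * binomPMF n e (poissonLT (m + 1) z)) * -(Real.exp (-z) * z ^ m / m !)) =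
      binomFactor n e (poissonLT (m + 1) z) * poissonFactor m z *
        binomLT (n + 1) (e + 1) (poissonLT (m + 1) z) := by
  have hQ : Q z (m + 1) = 1 - poissonLT (m + 1) z := by linarith [poissonLT_add_Q (m + 1) z]
  calc _ = (n + 1) * binomPMF n e (poissonLT (m + 1) z) * (z * (Real.exp (-z) * z ^ m / m !)) := by
          ring
    _ = poissonFactor m z * ((1 - poissonLT (m + 1) z) *
          ((n + 1) * binomPMF n e (poissonLT (m + 1) z))) := by
          rw [← poissonFactor_mul_Q m hz.le, hQ]
          ring
    _ = _ := by
          rw [← binomFactor_mul_binomLT he (poissonLT_pos m.succ_ne_zero hz.le)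
            (poissonLT_lt_one (m + 1) hz).le]
          ring

lemma strictAntiOn_binomFactor_poissonLT_mul_poissonFactor (he : e ≤ n) :
    StrictAntiOn (fun z => binomFactor n e (poissonLT (m + 1) z) * poissonFactor m z)
      (Ioi 0) := by
  intro z₁ hz₁ z₂ hz₂ h
  have hP : ∀ {z : ℝ}, 0 < z → poissonLT (m + 1) z ∈ Set.Ioc 0 1 := fun hz =>
    ⟨poissonLT_pos m.succ_ne_zero hz.le, (poissonLT_lt_one (m + 1) hz).le⟩
  have hz₁' : (0 : ℝ) < z₁ := hz₁
  have hz₂' : (0 : ℝ) < z₂ := hz₂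
  have hbinom : binomFactor n e (poissonLT (m + 1) z₂) ≤ binomFactor n e (poissonLT (m + 1) z₁) :=
    binomFactor_monotoneOn he (hP hz₂') (hP hz₁')
      (poissonLT_antitoneOn m hz₁'.le hz₂'.le h.le)
  calc binomFactor n e (poissonLT (m + 1) z₂) * poissonFactor m z₂
      ≤ binomFactor n e (poissonLT (m + 1) z₁) * poissonFactor m z₂ := by
        gcongr
        exact (poissonFactor_pos m hz₂'.le).le
    _ < binomFactor n e (poissonLT (m + 1) z₁) * poissonFactor m z₁ := by
        gcongr
        · exact binomFactor_pos he (hP hz₁').1 (hP hz₁').2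
        · exact poissonFactor_strictAntiOn m hz₁ hz₂ h

lemma lt_binomLT_poissonLT (he : e ≤ n) {s a b c : ℝ} (hs : 0 < s) (ha : 0 < a) (hab : a < b)
    (hbc : b < c) (hfa : a ≤ binomLT (n + 1) (e + 1) (poissonLT (m + 1) (s * a)))
    (hfc : c ≤ binomLT (n + 1) (e + 1) (poissonLT (m + 1) (s * c))) :
    b < binomLT (n + 1) (e + 1) (poissonLT (m + 1) (s * b)) := by
  have key := mul_lt_of_elasticity_strictAntiOn
    (fun z _ => hasDerivAt_binomLT_poissonLT n e m z)
    (fun z hz => binomLT_pos _ e.succ_ne_zero (poissonLT_pos m.succ_ne_zero hz.le).le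
      (poissonLT_lt_one (m + 1) hz))
    (fun z hz => mul_deriv_binomLT_poissonLT_eq m he hz)
    (strictAntiOn_binomFactor_poissonLT_mul_poissonFactor m he)
    (t := s⁻¹) (a := s * a) (b := s * b) (c := s * c) (mul_pos hs ha) (by gcongr) (by gcongr)
    (by rwa [inv_mul_cancel_left₀ hs.ne']) (by rwa [inv_mul_cancel_left₀ hs.ne'])
  rwa [inv_mul_cancel_left₀ hs.ne'] at key

end Composition

lemma exists_nonpos_on_interval {f : ℝ → ℝ} (hf : Continuous f) (h0 : f 0 = 0) (h1 : 0 < f 1)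
    (hdip : ∀ a b c, 0 < a → a < b → b < c → f a ≤ 0 → f c ≤ 0 → f b < 0)
    {x₀ : ℝ} (hx₀ : x₀ ∈ Icc (0 : ℝ) 1) (hfx₀ : f x₀ < 0) :
    ∃ u v : ℝ, 0 ≤ u ∧ u < v ∧ v < 1 ∧ (∀ x ∈ Icc 0 u, 0 ≤ f x) ∧
      (∀ x ∈ Icc v 1, 0 ≤ f x) ∧ ∀ x ∈ Icc u v, f x ≤ 0 := by
  set N := {x ∈ Icc (0 : ℝ) 1 | f x < 0}
  have hN : x₀ ∈ N := ⟨hx₀, hfx₀⟩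
  have hbelow : BddBelow N := ⟨0, fun x hx => hx.1.1⟩
  have habove : BddAbove N := ⟨1, fun x hx => hx.1.2⟩
  have hpos : ∀ x ∈ N, 0 < x := fun x hx => hx.1.1.lt_of_ne (by rintro rfl; linarith [hx.2])
  -- `f 0 = 0 < f 1` keeps `N` inside `(0, 1)`, where it is open
  have hside : ∀ x ∈ N, (∃ y < x, y ∈ N) ∧ ∃ y > x, y ∈ N := by
    intro x hx
    have hx1 : x < 1 := hx.1.2.lt_of_ne (by rintro rfl; linarith [hx.2])
    have hev : ∀ᶠ y in 𝓝 x, y ∈ N :=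
      Eventually.and (Icc_mem_nhds (hpos x hx) hx1) (hf.continuousAt.eventually (gt_mem_nhds hx.2))
    exact ⟨hev.exists_lt, hev.exists_gt⟩
  have hcl : ∀ x ∈ closure N, f x ≤ 0 :=
    closure_minimal (fun x hx => hx.2.le) (isClosed_le hf continuous_const)
  set u := sInf N
  set v := sSup N
  have hu : u ∈ Icc (0 : ℝ) 1 :=
    ⟨le_csInf ⟨x₀, hN⟩ fun x hx => hx.1.1, (csInf_le hbelow hN).trans hx₀.2⟩
  have hv : v ∈ Icc (0 : ℝ) 1 :=
    ⟨hx₀.1.trans (le_csSup habove hN), csSup_le ⟨x₀, hN⟩ fun x hx => hx.1.2⟩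
  have hfu : f u = 0 := by
    refine le_antisymm (hcl u (csInf_mem_closure ⟨x₀, hN⟩ hbelow)) (not_lt.mp fun hlt => ?_)
    obtain ⟨y, hyu, hy⟩ := (hside u ⟨hu, hlt⟩).1
    exact (csInf_le hbelow hy).not_gt hyu
  have hfv : f v = 0 := by
    refine le_antisymm (hcl v (csSup_mem_closure ⟨x₀, hN⟩ habove)) (not_lt.mp fun hlt => ?_)
    obtain ⟨y, hvy, hy⟩ := (hside v ⟨hv, hlt⟩).2
    exact (le_csSup habove hy).not_gt hvy
  obtain ⟨y, hyx₀, hy⟩ := (hside x₀ hN).1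
  refine ⟨u, v, hu.1, (csInf_le hbelow hy).trans_lt (hyx₀.trans_le (le_csSup habove hN)),
    hv.2.lt_of_ne (by rintro hv1; rw [hv1] at hfv; linarith), ?_, ?_, ?_⟩
  · rintro x ⟨hx0, hxu⟩
    rcases hxu.lt_or_eq with hxu | rfl
    · exact not_lt.mp fun hfx => notMem_of_lt_csInf hxu hbelow ⟨⟨hx0, hxu.le.trans hu.2⟩, hfx⟩
    · exact hfu.ge
  · rintro x ⟨hvx, hx1⟩
    rcases hvx.lt_or_eq with hvx | rfl
    · exact not_lt.mp fun hfx => notMem_of_csSup_lt hvx habove ⟨⟨hv.1.trans hvx.le, hx1⟩, hfx⟩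
    · exact hfv.ge
  · rintro x ⟨hux, hxv⟩
    rcases hux.lt_or_eq with hux | rfl
    · rcases hxv.lt_or_eq with hxv | rfl
      · obtain ⟨a, ha, hax⟩ := exists_lt_of_csInf_lt ⟨x₀, hN⟩ hux
        obtain ⟨c, hc, hxc⟩ := exists_lt_of_lt_csSup ⟨x₀, hN⟩ hxv
        exact (hdip a x c (hpos a ha) hax hxc ha.2.le hc.2.le).le
      · exact hfv.le
    · exact hfu.le

lemma xor_nonneg_or_nonpos_on_interval {f : ℝ → ℝ} (hf : Continuous f) (h0 : f 0 = 0)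
    (h1 : 0 < f 1) (hdip : ∀ a b c, 0 < a → a < b → b < c → f a ≤ 0 → f c ≤ 0 → f b < 0) :
    Xor (∀ x ∈ Icc (0 : ℝ) 1, 0 ≤ f x)
      (∃ u v : ℝ, 0 ≤ u ∧ u < v ∧ v < 1 ∧ (∀ x ∈ Icc 0 u, 0 ≤ f x) ∧
        (∀ x ∈ Icc v 1, 0 ≤ f x) ∧ ∀ x ∈ Icc u v, f x ≤ 0) := by
  by_cases hnonneg : ∀ x ∈ Icc (0 : ℝ) 1, 0 ≤ f x
  · refine Or.inl ⟨hnonneg, ?_⟩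
    rintro ⟨u, v, hu, huv, hv, -, -, hmid⟩
    have := hdip (u + (v - u) / 4) ((u + v) / 2) (v - (v - u) / 4) (by linarith) (by linarith)
      (by linarith) (hmid _ ⟨by linarith, by linarith⟩) (hmid _ ⟨by linarith, by linarith⟩)
    linarith [hnonneg ((u + v) / 2) ⟨by linarith, by linarith⟩]
  · push Not at hnonneg
    obtain ⟨x₀, hx₀, hfx₀⟩ := hnonneg
    exact Or.inr ⟨exists_nonpos_on_interval hf h0 h1 hdip hx₀ hfx₀,
      fun h => (h x₀ hx₀).not_gt hfx₀⟩

lemma Δfun_eq (h ℓ k : ℕ) (c x : ℝ) :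
    Δfun h ℓ k c x = x - binomLT (h - 1) ℓ (poissonLT k (c * h * x)) := by
  rw [Δfun, gB, show 1 - Q (c * h * x) k = poissonLT k (c * h * x) by
    linarith [poissonLT_add_Q k (c * h * x)]]
  rfl

/-- `Δ(0) = 0`, `Δ(1) > 0`, and exactly one of: `Δ ≥ 0` on `[0,1]`, or there exist
`0 ≤ u < v < 1` with `Δ ≥ 0` on `[0,u] ∪ [v,1]` and `Δ ≤ 0` on `[u,v]`. -/
theorem statement_19 (h ℓ k : ℕ) (hℓ1 : 1 ≤ ℓ) (hℓh : ℓ < h) (hk1 : 1 ≤ k)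
    (c : ℝ) (hc : 0 < c) :
    Δfun h ℓ k c 0 = 0 ∧ 0 < Δfun h ℓ k c 1 ∧
    Xor' (∀ x ∈ Set.Icc (0 : ℝ) 1, 0 ≤ Δfun h ℓ k c x)
      (∃ u v : ℝ, 0 ≤ u ∧ u < v ∧ v < 1 ∧
        (∀ x ∈ Set.Icc (0 : ℝ) u, 0 ≤ Δfun h ℓ k c x) ∧
        (∀ x ∈ Set.Icc v (1 : ℝ), 0 ≤ Δfun h ℓ k c x) ∧
        ∀ x ∈ Set.Icc u v, Δfun h ℓ k c x ≤ 0) := by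
  obtain ⟨m, rfl⟩ : ∃ m, k = m + 1 := ⟨k - 1, by omega⟩
  obtain ⟨e, rfl⟩ : ∃ e, ℓ = e + 1 := ⟨ℓ - 1, by omega⟩
  obtain ⟨n, rfl⟩ : ∃ n, h = n + 2 := ⟨h - 2, by omega⟩
  have he : e ≤ n := by omega
  set s := c * ((n + 2 : ℕ) : ℝ)
  have hs : 0 < s := by positivity
  have hΔ : ∀ x, Δfun (n + 2) (e + 1) (m + 1) c x =
      x - binomLT (n + 1) (e + 1) (poissonLT (m + 1) (s * x)) := fun x => by
    rw [Δfun_eq, mul_assoc]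
    rfl
  have hcont : Continuous fun x => Δfun (n + 2) (e + 1) (m + 1) c x := by
    simp only [hΔ, binomLT, binomPMF, poissonLT]
    fun_prop
  have h0 : Δfun (n + 2) (e + 1) (m + 1) c 0 = 0 := by
    simp [hΔ, poissonLT_zero, binomLT_one (show e + 1 ≤ n + 1 by omega)]
  have h1 : 0 < Δfun (n + 2) (e + 1) (m + 1) c 1 := by
    rw [hΔ, mul_one]
    linarith [binomLT_lt_one (show e + 1 ≤ n + 1 by omega)
      (poissonLT_pos m.succ_ne_zero hs.le) (poissonLT_lt_one (m + 1) hs)]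
  refine ⟨h0, h1, xor_nonneg_or_nonpos_on_interval hcont h0 h1 fun a b c' ha hab hbc hfa hfc => ?_⟩
  rw [hΔ] at hfa hfc ⊢
  linarith [lt_binomLT_poissonLT m he hs ha hab hbc (by linarith) (by linarith)]
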